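/- Fix real numbers t_f < t_l and a measurement interval [t_s, t_e] with t_s ≤ t_f and t_l ≤ t_e, and exponents α, β, γ ∈ (0, ∞). For n ≥ 2 and k ≥ 1, let x̃^n be the event with n distinct occurrences equally spaced over [t_f, t_l] (i.e., at timestamps t_f + i·(t_l - t_f)/(n-1) for i = 0, ..., n-1), and similarly let x̃^{n+k} have n + k distinct occurrences equally spaced over the same interval [t_f, t_l]. Then P(x̃^n;[t_s,t_e]) < P(x̃^{n+k};[t_s,t_e]). -/

import Mathlib

/-!
An event is a finite, nondecreasing list `l` of occurrence timestamps (reals, repetitions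
allowed). `tF l` / `tL l` are the first / last occurrences, `l.dedup` lists the distinct
occurrences, `gapSeq l i` is the `i`-th gap between consecutive distinct occurrences,
`Wterm` is the width term, `Fterm` the frequency term, `gapEntropy` the (normalized-gap)
Shannon entropy, `Sterm` the spread term, and `Pers` the persistence measure
`W^α · F^β · S^γ`.
-/

noncomputable section

/-- First occurrence `t_f` of an event (a sorted list of timestamps). -/
def tF (l : List ℝ) : ℝ := l.headI

/-- Last occurrence `t_l` of an event. -/
def tL (l : List ℝ) : ℝ := l.getLastD 0

/-- The `i`-th gap `g i = u (i+1) - u i` between consecutive distinct occurrences. -/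
def gapSeq (l : List ℝ) (i : ℕ) : ℝ := l.dedup.getD (i + 1) 0 - l.dedup.getD i 0

/-- Width term `W(x;[t_s,t_e]) = (t_l - t_f + 1)/(t_e - t_s + 1)` (0 if no occurrences). -/
def Wterm (l : List ℝ) (ts te : ℝ) : ℝ :=
  if l.length = 0 then 0 else (tL l - tF l + 1) / (te - ts + 1)

/-- Frequency term `F(x;[t_s,t_e]) = log₁₀ (n + 1)`. -/
def Fterm (l : List ℝ) : ℝ := Real.logb 10 (l.length + 1)

/-- Gap entropy `H(Γ_x) = -∑ (g i/(t_l - t_f)) · log₂ (g i/(t_l - t_f))`. -/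
def gapEntropy (l : List ℝ) : ℝ :=
  -∑ i ∈ Finset.range (l.dedup.length - 1),
    (gapSeq l i / (tL l - tF l)) * Real.logb 2 (gapSeq l i / (tL l - tF l))

/-- Spread term `S(x;[t_s,t_e]) = H(Γ_x)/log₂(m-1) + 1` if there are `m - 1 > 1` gaps,
and `1` if `m - 1 ∈ {0, 1}`. -/
def Sterm (l : List ℝ) : ℝ :=
  if 1 < l.dedup.length - 1 then
    gapEntropy l / Real.logb 2 (l.dedup.length - 1) + 1
  else 1

/-- Persistence measure `P(x;[t_s,t_e]) = W^α · F^β · S^γ` (real exponents). -/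
def Pers (l : List ℝ) (ts te α β γ : ℝ) : ℝ :=
  Wterm l ts te ^ α * Fterm l ^ β * Sterm l ^ γ

end

/-- The event with `n` equally spaced occurrences `a + i · (L / (n - 1))`, `i = 0, …, n-1`,
covering an interval of occurrences of width `L`. -/
noncomputable def uniformEvent (a L : ℝ) (n : ℕ) : List ℝ :=
  (List.range n).map (fun i => a + (i : ℝ) * (L / ((n : ℝ) - 1)))

/-! For occurrences equally spaced over a fixed interval, the width term does not depend on
the number `n` of occurrences, and all gaps are equal, so the normalised gap entropy is maximal:
the spread term is `1` for `n = 2` and `2` for `n ≥ 3`. Thus `S` does not decrease while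
`F = log₁₀ (n + 1)` strictly increases. -/

lemma neg_sum_range_inv_mul_logb_inv (b : ℝ) {N : ℕ} (hN : N ≠ 0) :
    -∑ _i ∈ Finset.range N, (N : ℝ)⁻¹ * Real.logb b (N : ℝ)⁻¹ = Real.logb b N := by
  rw [Finset.sum_const, Finset.card_range, nsmul_eq_mul, ← mul_assoc,
    mul_inv_cancel₀ (Nat.cast_ne_zero.mpr hN), one_mul, Real.logb_inv, neg_neg]

lemma Sterm_eq_one_of_length_dedup_le_two {l : List ℝ} (h : l.dedup.length ≤ 2) :
    Sterm l = 1 :=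
  if_neg (by omega)

section uniformEvent

variable (a L : ℝ) (n : ℕ)

/-- `uniformEvent` maps over `List.range n` coerced to `List ℝ` through the list monad;
this is the same list indexed by naturals. -/
lemma uniformEvent_eq_map_range :
    uniformEvent a L n = (List.range n).map fun i : ℕ => a + i * (L / (n - 1)) := by
  simp [uniformEvent, List.map_eq_flatMap, List.flatMap_assoc]

@[simp]
lemma uniformEvent_length : (uniformEvent a L n).length = n := by
  simp [uniformEvent_eq_map_range]

lemma getD_uniformEvent {i : ℕ} (hi : i < n) :
    (uniformEvent a L n).getD i 0 = a + i * (L / (n - 1)) := by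
  simp [uniformEvent_eq_map_range, hi]

lemma tF_uniformEvent (hn : n ≠ 0) : tF (uniformEvent a L n) = a := by
  obtain ⟨m, rfl⟩ := Nat.exists_eq_succ_of_ne_zero hn
  simp [tF, uniformEvent_eq_map_range, List.range_succ_eq_map]

lemma tL_uniformEvent (hn : 2 ≤ n) : tL (uniformEvent a L n) = a + L := by
  have hn1 : (n : ℝ) - 1 ≠ 0 := by
    have : (2 : ℝ) ≤ n := by exact_mod_cast hn
    linarith
  simp only [tL, uniformEvent_eq_map_range, List.getLastD_eq_getLast?, List.getLast?_map,
    List.getLast?_range, if_neg (show n ≠ 0 by omega), Option.map_some, Option.getD_some]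
  rw [Nat.cast_pred (by omega)]
  field_simp

variable {a L n}

lemma uniformEvent_nodup (hL : L ≠ 0) (hn : n ≠ 1) : (uniformEvent a L n).Nodup := by
  have hn1 : (n : ℝ) - 1 ≠ 0 := sub_ne_zero.mpr (by exact_mod_cast hn)
  rw [uniformEvent_eq_map_range]
  refine (List.nodup_range).map fun i j hij => ?_
  simpa [hL, hn1] using hij

lemma gapSeq_uniformEvent (hL : L ≠ 0) (hn : n ≠ 1) {i : ℕ} (hi : i + 1 < n) :
    gapSeq (uniformEvent a L n) i = L / (n - 1) := by
  rw [gapSeq, (uniformEvent_nodup hL hn).dedup, getD_uniformEvent a L n hi,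
    getD_uniformEvent a L n (by omega)]
  push_cast
  ring

lemma gapEntropy_uniformEvent (hL : L ≠ 0) (hn : 2 ≤ n) :
    gapEntropy (uniformEvent a L n) = Real.logb 2 (n - 1) := by
  have hn1 : ((n - 1 : ℕ) : ℝ) = n - 1 := Nat.cast_pred (by omega)
  have hgap : ∀ i ∈ Finset.range (n - 1),
      gapSeq (uniformEvent a L n) i / (a + L - a) = ((n - 1 : ℕ) : ℝ)⁻¹ := fun i hi => by
    rw [gapSeq_uniformEvent hL (by omega) (by have := Finset.mem_range.mp hi; omega), hn1, add_sub_cancel_left,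
      div_div_cancel_left' hL]
  rw [gapEntropy, (uniformEvent_nodup hL (by omega)).dedup, uniformEvent_length,
    tL_uniformEvent a L n hn, tF_uniformEvent a L n (by omega), Finset.sum_congr rfl
      fun i hi => by rw [hgap i hi], neg_sum_range_inv_mul_logb_inv _ (by omega), hn1]

lemma Sterm_uniformEvent_of_three_le (hL : L ≠ 0) (hn : 3 ≤ n) :
    Sterm (uniformEvent a L n) = 2 := by
  have hlog : Real.logb 2 ((n : ℝ) - 1) ≠ 0 := by
    have : (3 : ℝ) ≤ n := by exact_mod_cast hn
    exact (Real.logb_pos one_lt_two (by linarith)).ne'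
  rw [Sterm, (uniformEvent_nodup hL (by omega)).dedup, uniformEvent_length,
    if_pos (by omega), gapEntropy_uniformEvent hL (by omega), div_self hlog, one_add_one_eq_two]

lemma Sterm_uniformEvent_eq_one_or_two (hL : L ≠ 0) :
    Sterm (uniformEvent a L n) = 1 ∨ Sterm (uniformEvent a L n) = 2 := by
  rcases le_or_gt 3 n with hn | hn
  · exact .inr (Sterm_uniformEvent_of_three_le hL hn)
  · refine .inl (Sterm_eq_one_of_length_dedup_le_two ?_)
    have := (uniformEvent a L n).dedup_sublist.length_le
    simp only [uniformEvent_length] at this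
    omega

end uniformEvent

lemma Wterm_uniformEvent (a L ts te : ℝ) {n : ℕ} (hn : 2 ≤ n) :
    Wterm (uniformEvent a L n) ts te = (L + 1) / (te - ts + 1) := by
  rw [Wterm, uniformEvent_length, if_neg (by omega), tL_uniformEvent a L n hn,
    tF_uniformEvent a L n (by omega), add_sub_cancel_left]

lemma Fterm_pos {l : List ℝ} (hl : l ≠ []) : 0 < Fterm l := by
  have : (1 : ℝ) ≤ l.length := by exact_mod_cast List.length_pos_iff.mpr hl
  exact Real.logb_pos (by norm_num) (by linarith)

lemma Fterm_lt_Fterm {l l' : List ℝ} (h : l.length < l'.length) : Fterm l < Fterm l' := by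
  have : (l.length : ℝ) < l'.length := by exact_mod_cast h
  exact Real.logb_lt_logb (by norm_num) (by positivity) (by linarith)

lemma Pers_lt_Pers {l l' : List ℝ} {ts te α β γ : ℝ} (hβ : 0 < β) (hγ : 0 ≤ γ)
    (hW : Wterm l ts te = Wterm l' ts te) (hW₀ : 0 < Wterm l ts te)
    (hF₀ : 0 < Fterm l) (hF : Fterm l < Fterm l') (hS₀ : 0 < Sterm l) (hS : Sterm l ≤ Sterm l') :
    Pers l ts te α β γ < Pers l' ts te α β γ := by
  rw [Pers, Pers, ← hW, mul_assoc, mul_assoc]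
  refine mul_lt_mul_of_pos_left (mul_lt_mul ?_ ?_ ?_ ?_) (Real.rpow_pos_of_pos hW₀ α)
  · exact Real.rpow_lt_rpow hF₀.le hF hβ
  · exact Real.rpow_le_rpow hS₀.le hS hγ
  · exact Real.rpow_pos_of_pos hS₀ γ
  · exact (Real.rpow_pos_of_pos (hF₀.trans hF) β).le

theorem persistence_P2_more_occurrences_general (ts te tf tl : ℝ)
    (htf : tf < tl) (hstf : ts ≤ tf) (htle : tl ≤ te)
    (n k : ℕ) (hn : 2 ≤ n) (hk : 1 ≤ k)
    (α β γ : ℝ) (hβ : 0 < β) (hγ : 0 < γ) :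
    Pers (uniformEvent tf (tl - tf) n) ts te α β γ
      < Pers (uniformEvent tf (tl - tf) (n + k)) ts te α β γ := by
  have hL : tl - tf ≠ 0 := sub_ne_zero.mpr htf.ne'
  have hS : 0 < Sterm (uniformEvent tf (tl - tf) n) ∧ Sterm (uniformEvent tf (tl - tf) n) ≤ 2 := by
    rcases Sterm_uniformEvent_eq_one_or_two (a := tf) (n := n) hL with h | h <;> norm_num [h]
  have hS' : Sterm (uniformEvent tf (tl - tf) (n + k)) = 2 :=
    Sterm_uniformEvent_of_three_le hL (by omega)
  apply Pers_lt_Pers hβ hγ.le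
  · rw [Wterm_uniformEvent _ _ _ _ hn, Wterm_uniformEvent _ _ _ _ (by omega)]
  · rw [Wterm_uniformEvent _ _ _ _ hn]
    exact div_pos (by linarith) (by linarith)
  · exact Fterm_pos (List.ne_nil_of_length_pos (by rw [uniformEvent_length]; omega))
  · exact Fterm_lt_Fterm (by simp only [uniformEvent_length]; omega)
  · exact hS.1
  · exact hS.2.trans hS'.ge

/-- Property P2: among events with unique, uniformly spaced occurrences over the same
interval of occurrences `[t_f, t_l]`, persistence is strictly larger for the one with more
occurrences. -/
theorem persistence_P2_more_occurrences (ts te tf tl : ℝ)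
    (htf : tf < tl) (hstf : ts ≤ tf) (htle : tl ≤ te)
    (n k : ℕ) (hn : 2 ≤ n) (hk : 1 ≤ k)
    (α β γ : ℝ) (hα : 0 < α) (hβ : 0 < β) (hγ : 0 < γ) :
    Pers (uniformEvent tf (tl - tf) n) ts te α β γ
      < Pers (uniformEvent tf (tl - tf) (n + k)) ts te α β γ :=
  persistence_P2_more_occurrences_general ts te tf tl htf hstf htle n k hn hk α β γ hβ hγ
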